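/- One has max over w ∈ W_G of ⟨w·δ_G, δ_K⟩ = ⟨δ_G, δ_K⟩ − Σ_{θ∈Λ} ⟨θ, δ_K⟩ (with the convention that the sum is 0 when Λ is empty). -/

import Mathlib

open scoped RealInnerProductSpace

/-- The reflection in the hyperplane orthogonal to `α`. -/
noncomputable def rootReflection {V : Type*} [NormedAddCommGroup V] [InnerProductSpace ℝ V]
    [FiniteDimensional ℝ V] (α : V) : V ≃ₗᵢ[ℝ] V :=
  Submodule.reflection ((ℝ ∙ α)ᗮ)

/-- The Weyl group: the group generated by the reflections in the roots. -/
noncomputable def weylGroup {V : Type*} [NormedAddCommGroup V] [InnerProductSpace ℝ V]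
    [FiniteDimensional ℝ V] (Φ : Finset V) : Subgroup (V ≃ₗᵢ[ℝ] V) :=
  Subgroup.closure { w | ∃ α ∈ Φ, w = rootReflection α }

/-!
For any `v`, `⟪w δ_G, v⟫ = ½ ∑_{θ > 0} ⟪w θ, v⟫ ≤ ½ ∑_{θ > 0} |⟪w θ, v⟫|`, and the last sum does not
depend on `w`: `θ ↦ |⟪θ, v⟫|` is even, so its sum over the positive roots is half its sum over `Φ`,
which `w` permutes. Equality holds when `w⁻¹ v` is dominant; such a `w` is one maximising
`f (w v)` over the finite Weyl group, where `f` defines the positive system, since a reflection in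
a positive root pairing negatively with `w v` would increase `f (w v)`. Finally, with `v = δ_K`,
`½ ∑_{θ > 0} |⟪θ, δ_K⟫| = ⟪δ_G, δ_K⟫ - ∑_{θ ∈ Λ} ⟪θ, δ_K⟫`.
-/

open Finset

theorem Finset.sum_abs_eq_sum_sub_two_mul_sum_filter_neg {ι : Type*} (s : Finset ι) (x : ι → ℝ) :
    ∑ i ∈ s, |x i| = ∑ i ∈ s, x i - 2 * ∑ i ∈ s with x i < 0, x i := by
  rw [sum_filter, mul_sum, ← sum_sub_distrib]
  refine sum_congr rfl fun i _ => ?_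
  rcases lt_or_ge (x i) 0 with h | h
  · rw [if_pos h, abs_of_neg h]; ring
  · rw [if_neg h.not_gt, abs_of_nonneg h]; ring

theorem sum_eq_two_nsmul_sum_positive_of_even {V M : Type*} [AddCommGroup V] [Module ℝ V]
    [AddCommMonoid M] {Φ P : Finset V} {f : V →ₗ[ℝ] ℝ}
    (hneg : ∀ α ∈ Φ, -α ∈ Φ) (hf : ∀ α ∈ Φ, f α ≠ 0) (hP : ∀ α, α ∈ P ↔ α ∈ Φ ∧ 0 < f α)
    {g : V → M} (hg : ∀ x, g (-x) = g x) : ∑ α ∈ Φ, g α = 2 • ∑ α ∈ P, g α := by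
  have hpos : Φ.filter (0 < f ·) = P := by
    ext α
    rw [mem_filter, hP]
  have hnonpos : ∑ α ∈ Φ with ¬0 < f α, g α = ∑ α ∈ P, g α := by
    refine sum_nbij' Neg.neg Neg.neg (fun α hα => ?_) (fun α hα => ?_) (fun α _ => neg_neg α)
      (fun α _ => neg_neg α) fun α _ => (hg α).symm
    · obtain ⟨hαΦ, hα⟩ := mem_filter.1 hα
      exact (hP _).2 ⟨hneg α hαΦ, by simpa using (hf α hαΦ).lt_of_le (not_lt.1 hα)⟩
    · obtain ⟨hαΦ, hα⟩ := (hP α).1 hα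
      exact mem_filter.2 ⟨hneg α hαΦ, by simpa using hα.le⟩
  rw [← sum_filter_add_sum_filter_not Φ (0 < f ·), hpos, hnonpos, two_nsmul]

section WeylGroup

variable {V : Type*} [NormedAddCommGroup V] [InnerProductSpace ℝ V] [FiniteDimensional ℝ V]

theorem rootReflection_apply (α β : V) :
    rootReflection α β = β - (2 * ⟪α, β⟫ / ⟪α, α⟫) • α := by
  rw [rootReflection, Submodule.reflection_apply, Submodule.starProjection_orthogonal_val,
    Submodule.starProjection_singleton, real_inner_self_eq_norm_sq, mul_div_assoc]
  simp only [RCLike.ofReal_real_eq_id, id_eq]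
  module

theorem rootReflection_self (α : V) : rootReflection α α = -α :=
  Submodule.reflection_orthogonalComplement_singleton_eq_neg α

theorem rootReflection_rootReflection (α β : V) : rootReflection α (rootReflection α β) = β :=
  Submodule.reflection_reflection _ _

variable {Φ : Finset V}

theorem neg_mem_of_rootReflection_mem (hrefl : ∀ α ∈ Φ, ∀ β ∈ Φ, rootReflection α β ∈ Φ)
    {α : V} (hα : α ∈ Φ) : -α ∈ Φ := by
  simpa only [rootReflection_self] using hrefl α hα α hα

theorem apply_mem_iff_of_mem_weylGroup (hrefl : ∀ α ∈ Φ, ∀ β ∈ Φ, rootReflection α β ∈ Φ)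
    {w : V ≃ₗᵢ[ℝ] V} (hw : w ∈ weylGroup Φ) (α : V) : w α ∈ Φ ↔ α ∈ Φ := by
  induction hw using Subgroup.closure_induction generalizing α with
  | mem s hs =>
    obtain ⟨β, hβ, rfl⟩ := hs
    refine ⟨fun h => ?_, hrefl β hβ α⟩
    simpa only [rootReflection_rootReflection] using hrefl β hβ _ h
  | one => rfl
  | mul x y _ _ hx hy => exact (hx _).trans (hy _)
  | inv x _ hx =>
    rw [← hx]
    simp

theorem finite_weylGroup (hspan : Submodule.span ℝ (Φ : Set V) = ⊤)
    (hrefl : ∀ α ∈ Φ, ∀ β ∈ Φ, rootReflection α β ∈ Φ) : Finite (weylGroup Φ) := by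
  refine Finite.of_injective (fun (w : weylGroup Φ) (α : Φ) =>
    (⟨w.1 α, (apply_mem_iff_of_mem_weylGroup hrefl w.2 α).2 α.2⟩ : Φ)) fun w₁ w₂ h => ?_
  have hΦ : Set.EqOn (w₁.1 : V →ₗ[ℝ] V) (w₂.1 : V →ₗ[ℝ] V) Φ := fun α hα =>
    congrArg Subtype.val (congrFun h ⟨α, hα⟩)
  exact Subtype.ext <| LinearIsometryEquiv.ext <| LinearMap.congr_fun (LinearMap.ext_on hspan hΦ)

theorem sum_apply_eq_of_mem_weylGroup {M : Type*} [AddCommMonoid M]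
    (hrefl : ∀ α ∈ Φ, ∀ β ∈ Φ, rootReflection α β ∈ Φ) {w : V ≃ₗᵢ[ℝ] V} (hw : w ∈ weylGroup Φ)
    (g : V → M) : ∑ α ∈ Φ, g (w α) = ∑ α ∈ Φ, g α :=
  sum_equiv w.toEquiv (fun α => (apply_mem_iff_of_mem_weylGroup hrefl hw α).symm) fun _ _ => rfl

variable {P : Finset V} {f : V →ₗ[ℝ] ℝ}

theorem sum_abs_inner_apply_eq_of_mem_weylGroup
    (hrefl : ∀ α ∈ Φ, ∀ β ∈ Φ, rootReflection α β ∈ Φ) (hf : ∀ α ∈ Φ, f α ≠ 0)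
    (hP : ∀ α, α ∈ P ↔ α ∈ Φ ∧ 0 < f α) {w : V ≃ₗᵢ[ℝ] V} (hw : w ∈ weylGroup Φ) (v : V) :
    ∑ θ ∈ P, |⟪w θ, v⟫| = ∑ θ ∈ P, |⟪θ, v⟫| := by
  have hneg := fun α hα => neg_mem_of_rootReflection_mem hrefl (α := α) hα
  have h₁ := sum_eq_two_nsmul_sum_positive_of_even hneg hf hP (g := fun θ => |⟪w θ, v⟫|)
    fun x => by simp only [map_neg, inner_neg_left, abs_neg]
  have h₂ := sum_eq_two_nsmul_sum_positive_of_even hneg hf hP (g := fun θ => |⟪θ, v⟫|)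
    fun x => by simp only [inner_neg_left, abs_neg]
  rw [sum_apply_eq_of_mem_weylGroup hrefl hw (fun θ => |⟪θ, v⟫|), h₂, two_nsmul, two_nsmul] at h₁
  linarith

theorem exists_mem_weylGroup_forall_inner_apply_nonneg
    (hspan : Submodule.span ℝ (Φ : Set V) = ⊤)
    (hrefl : ∀ α ∈ Φ, ∀ β ∈ Φ, rootReflection α β ∈ Φ)
    (hP : ∀ α, α ∈ P ↔ α ∈ Φ ∧ 0 < f α) (v : V) :
    ∃ w ∈ weylGroup Φ, ∀ θ ∈ P, 0 ≤ ⟪θ, w v⟫ := by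
  have := finite_weylGroup hspan hrefl
  obtain ⟨w, hw⟩ := Finite.exists_max fun w : weylGroup Φ => f (w.1 v)
  refine ⟨w, w.2, fun θ hθ => ?_⟩
  by_contra! hneg
  obtain ⟨hθΦ, hfθ⟩ := (hP θ).1 hθ
  have hs : rootReflection θ ∈ weylGroup Φ := Subgroup.subset_closure ⟨θ, hθΦ, rfl⟩
  have hθθ : 0 < ⟪θ, θ⟫ := real_inner_self_pos.2 fun h => by simp [h] at hfθ
  have hc : 2 * ⟪θ, w.1 v⟫ / ⟪θ, θ⟫ < 0 := div_neg_of_neg_of_pos (by linarith) hθθ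
  have hle : f (rootReflection θ (w.1 v)) ≤ f (w.1 v) := by exact hw (⟨_, hs⟩ * w)
  rw [rootReflection_apply, map_sub, map_smul, smul_eq_mul] at hle
  nlinarith [mul_neg_of_neg_of_pos hc hfθ]

theorem isGreatest_inner_apply_half_sum_positive
    (hspan : Submodule.span ℝ (Φ : Set V) = ⊤)
    (hrefl : ∀ α ∈ Φ, ∀ β ∈ Φ, rootReflection α β ∈ Φ) (hf : ∀ α ∈ Φ, f α ≠ 0)
    (hP : ∀ α, α ∈ P ↔ α ∈ Φ ∧ 0 < f α) (v : V) :
    IsGreatest {r : ℝ | ∃ w ∈ weylGroup Φ, r = ⟪w ((2⁻¹ : ℝ) • ∑ α ∈ P, α), v⟫}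
      (2⁻¹ * ∑ θ ∈ P, |⟪θ, v⟫|) := by
  have expand (w : V ≃ₗᵢ[ℝ] V) : ⟪w ((2⁻¹ : ℝ) • ∑ α ∈ P, α), v⟫ = 2⁻¹ * ∑ θ ∈ P, ⟪w θ, v⟫ := by
    rw [map_smul, map_sum, real_inner_smul_left, sum_inner]
  constructor
  · obtain ⟨w, hw, hdom⟩ := exists_mem_weylGroup_forall_inner_apply_nonneg hspan hrefl hP v
    refine ⟨w⁻¹, inv_mem hw, ?_⟩
    rw [expand, ← sum_abs_inner_apply_eq_of_mem_weylGroup hrefl hf hP (inv_mem hw)]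
    refine congrArg _ (sum_congr rfl fun θ hθ => abs_of_nonneg ?_)
    rw [LinearIsometryEquiv.inner_map_eq_flip]
    exact hdom θ hθ
  · rintro r ⟨w, hw, rfl⟩
    rw [expand, ← sum_abs_inner_apply_eq_of_mem_weylGroup hrefl hf hP hw]
    gcongr with θ
    exact le_abs_self _

end WeylGroup

theorem stmt7_general {V : Type*} [NormedAddCommGroup V] [InnerProductSpace ℝ V] [FiniteDimensional ℝ V]
    (Φ : Finset V)
    (hspan : Submodule.span ℝ (Φ : Set V) = ⊤)
    (hrefl : ∀ α ∈ Φ, ∀ β ∈ Φ, rootReflection α β ∈ Φ)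
    (ΦGp : Finset V)
    (hΦGp : ∃ f : V →ₗ[ℝ] ℝ, (∀ α ∈ Φ, f α ≠ 0) ∧ ∀ α, α ∈ ΦGp ↔ α ∈ Φ ∧ 0 < f α)
    (δG : V) (hδG : δG = (2⁻¹ : ℝ) • ∑ α ∈ ΦGp, α)
    (δK : V)
    (Λ : Finset V) (hΛ : ∀ θ, θ ∈ Λ ↔ θ ∈ ΦGp ∧ ⟪θ, δK⟫ < 0) :
    IsGreatest {r : ℝ | ∃ w ∈ weylGroup Φ, r = ⟪w δG, δK⟫}
      (⟪δG, δK⟫ - ∑ θ ∈ Λ, ⟪θ, δK⟫) := by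
  obtain ⟨f, hf, hP⟩ := hΦGp
  have hΛ' : Λ = ΦGp.filter (⟪·, δK⟫ < 0) := by
    ext θ
    rw [hΛ, mem_filter]
  have hδG' : ⟪δG, δK⟫ = 2⁻¹ * ∑ θ ∈ ΦGp, ⟪θ, δK⟫ := by
    rw [hδG, real_inner_smul_left, sum_inner]
  have hrhs := ΦGp.sum_abs_eq_sum_sub_two_mul_sum_filter_neg (⟪·, δK⟫)
  subst hδG
  convert isGreatest_inner_apply_half_sum_positive hspan hrefl hf hP δK using 1
  rw [hΛ', hδG']
  linarith

theorem stmt7 {V : Type*} [NormedAddCommGroup V] [InnerProductSpace ℝ V] [FiniteDimensional ℝ V]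
    (Φ : Finset V) (hΦ0 : (0 : V) ∉ Φ)
    (hspan : Submodule.span ℝ (Φ : Set V) = ⊤)
    (hred : ∀ α ∈ Φ, ∀ t : ℝ, t • α ∈ Φ → t = 1 ∨ t = -1)
    (hrefl : ∀ α ∈ Φ, ∀ β ∈ Φ, rootReflection α β ∈ Φ)
    (ΦGp : Finset V)
    (hΦGp : ∃ f : V →ₗ[ℝ] ℝ, (∀ α ∈ Φ, f α ≠ 0) ∧ ∀ α, α ∈ ΦGp ↔ α ∈ Φ ∧ 0 < f α)
    (δG : V) (hδG : δG = (2⁻¹ : ℝ) • ∑ α ∈ ΦGp, α)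
    (ΦK : Finset V) (hΦKsub : ΦK ⊆ Φ)
    (hΦKneg : ∀ α ∈ ΦK, -α ∈ ΦK)
    (hΦKrefl : ∀ α ∈ ΦK, ∀ β ∈ ΦK, rootReflection α β ∈ ΦK)
    (ΦKp : Finset V) (hΦKp : ∀ α, α ∈ ΦKp ↔ α ∈ ΦK ∧ α ∈ ΦGp)
    (δK : V) (hδK : δK = (2⁻¹ : ℝ) • ∑ α ∈ ΦKp, α)
    (Λ : Finset V) (hΛ : ∀ θ, θ ∈ Λ ↔ θ ∈ ΦGp ∧ ⟪θ, δK⟫ < 0)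
    (hinner : ∃ x : V, (∀ θ ∈ Φ, ∃ n : ℤ, ⟪θ, x⟫ = n / 2) ∧
      (∀ θ, θ ∈ ΦK ↔ θ ∈ Φ ∧ ∃ n : ℤ, ⟪θ, x⟫ = (n : ℝ))) :
    IsGreatest {r : ℝ | ∃ w ∈ weylGroup Φ, r = ⟪w δG, δK⟫}
      (⟪δG, δK⟫ - ∑ θ ∈ Λ, ⟪θ, δK⟫) :=
  stmt7_general Φ hspan hrefl ΦGp hΦGp δG hδG δK Λ hΛ
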